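/- In the algebra E′, the bidegree (5, 261) component E′^{5,261} is a one-dimensional F₂-vector space with basis the class of h₀D₃(2); moreover the monomials h₀³h₁h₈, h₀h₁²h₇², and h₀h₂h₆²h₇ all equal 0 in E′. (This verifies Ext_A^{5,5+256}(ℤ/2,ℤ/2) = ⟨h₀D₃(2)⟩.) -/

import Mathlib

noncomputable section

open MvPolynomial

/-- Generators of Chen's algebra `E′` in homological degrees ≤ 5.
Here `g i` denotes the generator `g_{i+1}` (the family `g` starts at index 1). -/
inductive Gen : Type
  | h (i : ℕ)
  | c (i : ℕ)
  | d (i : ℕ)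
  | e (i : ℕ)
  | f (i : ℕ)
  | g (i : ℕ)
  | p (i : ℕ)
  | D3 (i : ℕ)
  | p' (i : ℕ)
  | P1h1
  | P1h2
  | n (i : ℕ)
  | x (i : ℕ)
  | D1 (i : ℕ)
  | H1 (i : ℕ)
  | Q3 (i : ℕ)
  | K (i : ℕ)
  | J (i : ℕ)
  | T (i : ℕ)
  | V (i : ℕ)
  | V' (i : ℕ)
  | U (i : ℕ)

/-- Homological degree of the generators. -/
def hdeg : Gen → ℕ
  | .h _ => 1
  | .c _ => 3
  | .d _ => 4
  | .e _ => 4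
  | .f _ => 4
  | .g _ => 4
  | .p _ => 4
  | .D3 _ => 4
  | .p' _ => 4
  | _ => 5

/-- Internal degree of the generators. -/
def ideg : Gen → ℕ
  | .h i => 2 ^ i
  | .c i => 2 ^ (i + 3) + 2 ^ (i + 1) + 2 ^ i
  | .d i => 2 ^ (i + 4) + 2 ^ (i + 1)
  | .e i => 2 ^ (i + 4) + 2 ^ (i + 2) + 2 ^ i
  | .f i => 2 ^ (i + 4) + 2 ^ (i + 2) + 2 ^ (i + 1)
  | .g i => 2 ^ (i + 4) + 2 ^ (i + 3)      -- internal degree of `g_{i+1}`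
  | .p i => 2 ^ (i + 5) + 2 ^ (i + 2) + 2 ^ i
  | .D3 i => 2 ^ (i + 6) + 2 ^ i
  | .p' i => 2 ^ (i + 6) + 2 ^ (i + 3) + 2 ^ i
  | .P1h1 => 14
  | .P1h2 => 16
  | .n i => 2 ^ (i + 5) + 2 ^ (i + 2)
  | .x i => 2 ^ (i + 5) + 2 ^ (i + 3) + 2 ^ (i + 1)
  | .D1 i => 2 ^ (i + 5) + 2 ^ (i + 4) + 2 ^ (i + 2) + 2 ^ i
  | .H1 i => 2 ^ (i + 6) + 2 ^ (i + 1) + 2 ^ i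
  | .Q3 i => 2 ^ (i + 6) + 2 ^ (i + 3)
  | .K i => 2 ^ (i + 7) + 2 ^ (i + 1)
  | .J i => 2 ^ (i + 7) + 2 ^ (i + 2) + 2 ^ i
  | .T i => 2 ^ (i + 7) + 2 ^ (i + 4) + 2 ^ (i + 1)
  | .V i => 2 ^ (i + 7) + 2 ^ (i + 5) + 2 ^ i
  | .V' i => 2 ^ (i + 8) + 2 ^ i
  | .U i => 2 ^ (i + 8) + 2 ^ (i + 3) + 2 ^ i

abbrev P := MvPolynomial Gen (ZMod 2)

/-- Chen's relations in homological degrees ≤ 5: the relations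
`hᵢhᵢ₊₁ = 0`, `hᵢhᵢ₊₂² = 0`, `hᵢ²hᵢ₊₃² = 0`, `hᵢ³ = hᵢ₋₁²hᵢ₊₁` (i ≥ 1),
`hⱼcᵢ = 0` for `j ∈ {i-1, i, i+2, i+3}`, together with Chen's 39 families of
degree-5 relations (with `g j` standing for `g_{j+1}`). -/
def rels : Set P :=
  ⋃ j : ℕ,
    ({ X (Gen.h j) * X (Gen.h (j + 1)),
       X (Gen.h j) * X (Gen.h (j + 2)) ^ 2,
       X (Gen.h j) ^ 2 * X (Gen.h (j + 3)) ^ 2,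
       X (Gen.h (j + 1)) ^ 3 - X (Gen.h j) ^ 2 * X (Gen.h (j + 2)),
       X (Gen.h j) * X (Gen.c (j + 1)),
       X (Gen.h j) * X (Gen.c j),
       X (Gen.h (j + 2)) * X (Gen.c j),
       X (Gen.h (j + 3)) * X (Gen.c j),
       -- Chen's degree-5 relations:
       X (Gen.h (j + 4)) ^ 2 * X (Gen.c j),
       X (Gen.h (j + 3)) * X (Gen.h j) * X (Gen.c (j + 2)),
       X (Gen.h (j + 1)) ^ 2 * X (Gen.c j),
       X (Gen.h j) * X (Gen.d (j + 1)),
       X (Gen.h (j + 3)) * X (Gen.d j),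
       X (Gen.h (j + 4)) * X (Gen.d j),
       X (Gen.h j) * X (Gen.e (j + 1)),
       X (Gen.h (j + 4)) * X (Gen.e j),
       X (Gen.h (j + 1)) * X (Gen.f j),
       X (Gen.h (j + 3)) * X (Gen.f j),
       X (Gen.h (j + 4)) * X (Gen.f j),
       X (Gen.h (j + 3)) * X (Gen.g j),
       X (Gen.h j) * X (Gen.p (j + 1)),
       X (Gen.h (j + 1)) * X (Gen.p j),
       X (Gen.h (j + 2)) * X (Gen.p j),
       X (Gen.h (j + 4)) * X (Gen.p j),
       X (Gen.h (j + 5)) * X (Gen.p j),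
       X (Gen.h j) * X (Gen.D3 (j + 1)),
       X (Gen.h j) * X (Gen.D3 j),
       X (Gen.h (j + 5)) * X (Gen.D3 j),
       X (Gen.h (j + 6)) * X (Gen.D3 j),
       X (Gen.h j) * X (Gen.p' (j + 1)),
       X (Gen.h (j + 2)) * X (Gen.p' j),
       X (Gen.h (j + 3)) * X (Gen.p' j),
       X (Gen.h (j + 6)) * X (Gen.p' j),
       X (Gen.h (j + 4)) * X (Gen.h (j + 1)) * X (Gen.c j) - X (Gen.h (j + 3)) * X (Gen.e j),
       X (Gen.h (j + 4)) * X (Gen.h j) * X (Gen.c (j + 3)) - X (Gen.h (j + 5)) * X (Gen.p' j),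
       X (Gen.h (j + 5)) ^ 2 * X (Gen.c j) - X (Gen.h (j + 1)) * X (Gen.p' j),
       X (Gen.h j) * X (Gen.d (j + 2)) - X (Gen.h (j + 3)) * X (Gen.D3 j),
       X (Gen.h (j + 1)) * X (Gen.d (j + 1)) - X (Gen.h j) * X (Gen.p j),
       X (Gen.h (j + 2)) * X (Gen.d (j + 1)) - X (Gen.h (j + 4)) * X (Gen.g j),
       X (Gen.h (j + 2)) * X (Gen.d j) - X (Gen.h j) * X (Gen.e j),
       X (Gen.h (j + 1)) * X (Gen.e j) - X (Gen.h j) * X (Gen.f j),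
       X (Gen.h (j + 2)) * X (Gen.e (j + 1)) - X (Gen.h j) ^ 2 * X (Gen.c (j + 2)),
       X (Gen.h (j + 2)) * X (Gen.e j) - X (Gen.h j) * X (Gen.g j),
       X (Gen.h j) * X (Gen.f (j + 2)) - X (Gen.h (j + 4)) * X (Gen.p' j),
       X (Gen.h j) * X (Gen.f (j + 1)) - X (Gen.h (j + 3)) * X (Gen.p j),
       X (Gen.h (j + 2)) * X (Gen.f j) - X (Gen.h (j + 1)) * X (Gen.g j),
       X (Gen.h (j + 3)) * X (Gen.g (j + 1)) - X (Gen.h (j + 5)) * X (Gen.g j) } : Set P)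

def relIdeal : Ideal P := Ideal.span rels

/-- Chen's algebra `E′`, isomorphic to `Ext_A^{k,*}(ℤ/2, ℤ/2)` in homological degrees `k ≤ 5`. -/
abbrev E' := P ⧸ relIdeal

def mkE : P →ₐ[ZMod 2] E' := Ideal.Quotient.mkₐ (ZMod 2) relIdeal

/-- The bidegree `(k, d)` component `E′^{k,d}` of `E′`: the image of the space of polynomials
that are weighted homogeneous of homological degree `k` and internal degree `d`. -/
def component (k d : ℕ) : Submodule (ZMod 2) E' :=
  Submodule.map mkE.toLinearMap
    (weightedHomogeneousSubmodule (ZMod 2) hdeg k ⊓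
      weightedHomogeneousSubmodule (ZMod 2) ideg d)

/-! Apart from the `hᵢ` every generator has homological degree at least 3, so a monomial of
bidegree `(5, 261)` is a generator of degree 5, a product `hᵢ·x` with `x` of degree 4, a product
`hᵢhⱼcₖ`, or a product of five `hᵢ`. The internal degree of a generator with subscript `i` is at
least `2ⁱ`, so only subscripts below 9 can occur, and a finite check of internal degrees leaves
`h₀D₃(2)`, `h₀³h₁h₈`, `h₀h₁²h₇²` and `h₀h₂h₆²h₇`. The last three are multiples of `h₀h₁` or
`h₆h₇`, hence zero. The class of `h₀D₃(2)` survives because every relation vanishes at the point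
of `F₂^Gen` where `h₀ = D₃(2) = 1` and all other generators are `0`. -/

open Finsupp

section Monomials

variable {σ R : Type*} [CommSemiring R]

lemma Finsupp.weight_eq_sum_map_toMultiset {M : Type*} [AddCommMonoid M] (w : σ → M)
    (d : σ →₀ ℕ) : weight w d = ((toMultiset d).map w).sum := by
  rw [toMultiset_map, sum_toMultiset, sum_mapDomain_index (h := fun a n ↦ n • a)
    (fun _ ↦ zero_nsmul _) (fun _ _ _ ↦ add_nsmul _ _ _), weight_apply]

lemma MvPolynomial.monomial_one_eq_prod_map_X_toMultiset (d : σ →₀ ℕ) :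
    (monomial d 1 : MvPolynomial σ R) = ((toMultiset d).map X).prod := by
  rw [toMultiset_map, prod_toMultiset, prod_mapDomain_index (fun _ ↦ pow_zero _)
    (fun _ _ _ ↦ pow_add _ _ _), monomial_eq, C_1, one_mul]

lemma MvPolynomial.map_inf_weightedHomogeneousSubmodule_le {M₁ M₂ N : Type*} [AddCommMonoid M₁]
    [AddCommMonoid M₂] [AddCommMonoid N] [Module R N] {w₁ : σ → M₁} {w₂ : σ → M₂} {m₁ : M₁}
    {m₂ : M₂} (f : MvPolynomial σ R →ₗ[R] N) {S : Submodule R N}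
    (h : ∀ d, weight w₁ d = m₁ → weight w₂ d = m₂ → f (monomial d 1) ∈ S) :
    (weightedHomogeneousSubmodule R w₁ m₁ ⊓ weightedHomogeneousSubmodule R w₂ m₂).map f ≤ S := by
  rintro _ ⟨p, ⟨hp₁, hp₂⟩, rfl⟩
  rw [p.as_sum, map_sum]
  refine S.sum_mem fun d hd ↦ ?_
  have hd' := mem_support_iff.1 hd
  rw [← mul_one (coeff d p), ← smul_eq_mul, ← smul_monomial, map_smul]
  exact S.smul_mem _ (h d (hp₁ hd') (hp₂ hd'))

end Monomials

lemma hdeg_eq_one_or_three_le (g : Gen) : hdeg g = 1 ∨ 3 ≤ hdeg g := by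
  cases g <;> simp [hdeg]

lemma exists_eq_h_of_hdeg_eq_one {g : Gen} (h : hdeg g = 1) : ∃ i, g = .h i := by
  cases g <;> simp_all [hdeg]

lemma exists_eq_c_of_hdeg_eq_three {g : Gen} (h : hdeg g = 3) : ∃ i, g = .c i := by
  cases g <;> simp_all [hdeg]

def Gen.index : Gen → ℕ
  | .h i | .c i | .d i | .e i | .f i | .g i | .p i | .D3 i | .p' i | .n i | .x i | .D1 i
  | .H1 i | .Q3 i | .K i | .J i | .T i | .V i | .V' i | .U i => i
  | .P1h1 | .P1h2 => 0

lemma Gen.two_pow_index_le_ideg (g : Gen) : 2 ^ g.index ≤ ideg g := by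
  cases g <;> simp only [ideg, Gen.index] <;> ring_nf <;> omega

lemma lt_nine_of_two_pow_le_261 {m : ℕ} (h : 2 ^ m ≤ 261) : m < 9 :=
  (Nat.pow_lt_pow_iff_right (by norm_num)).1 (h.trans_lt (by norm_num))

lemma Gen.index_lt_nine_of_ideg_le {g : Gen} (h : ideg g ≤ 261) : g.index < 9 :=
  lt_nine_of_two_pow_le_261 (g.two_pow_index_le_ideg.trans h)

lemma ideg_ne_261_of_hdeg_eq_five {g : Gen} (hg : hdeg g = 5) : ideg g ≠ 261 := by
  cases g <;> simp only [hdeg, ideg] at hg ⊢ <;> ring_nf <;> omega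

lemma eq_h_zero_and_eq_D3_two {a g : Gen} (ha : hdeg a = 1) (hg : hdeg g = 4)
    (h : ideg a + ideg g = 261) : a = .h 0 ∧ g = .D3 2 := by
  obtain ⟨i, rfl⟩ := exists_eq_h_of_hdeg_eq_one ha
  have hi := Gen.index_lt_nine_of_ideg_le (g := .h i) (by omega)
  have hj := Gen.index_lt_nine_of_ideg_le (g := g) (by omega)
  cases g <;> simp only [hdeg, ideg, Gen.index, Gen.h.injEq, Gen.D3.injEq, reduceCtorEq,
    and_false] at hg h hi hj ⊢ <;> (try omega) <;>
  · rename_i j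
    interval_cases i <;> interval_cases j <;> omega

lemma ideg_add_ideg_add_ideg_ne_261 {a b c : Gen} (ha : hdeg a = 1) (hb : hdeg b = 1)
    (hc : hdeg c = 3) : ideg a + ideg b + ideg c ≠ 261 := by
  obtain ⟨i, rfl⟩ := exists_eq_h_of_hdeg_eq_one ha
  obtain ⟨j, rfl⟩ := exists_eq_h_of_hdeg_eq_one hb
  obtain ⟨k, rfl⟩ := exists_eq_c_of_hdeg_eq_three hc
  intro h
  have hi := Gen.index_lt_nine_of_ideg_le (g := .h i) (by omega)
  have hj := Gen.index_lt_nine_of_ideg_le (g := .h j) (by omega)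
  have hk := Gen.index_lt_nine_of_ideg_le (g := .c k) (by omega)
  simp only [ideg, Gen.index] at h hi hj hk
  interval_cases i <;> interval_cases j <;> interval_cases k <;> omega

lemma exponents_of_five_two_pows_fin : ∀ a b c d e : Fin 9,
    2 ^ a.val + 2 ^ b.val + 2 ^ c.val + 2 ^ d.val + 2 ^ e.val = 261 →
      ({a.val, b.val, c.val, d.val, e.val} : Multiset ℕ) = {0, 0, 0, 1, 8} ∨
      ({a.val, b.val, c.val, d.val, e.val} : Multiset ℕ) = {0, 1, 1, 7, 7} ∨
      ({a.val, b.val, c.val, d.val, e.val} : Multiset ℕ) = {0, 2, 6, 6, 7} := by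
  decide

lemma exponents_of_five_two_pows_eq_261 {a b c d e : ℕ}
    (h : 2 ^ a + 2 ^ b + 2 ^ c + 2 ^ d + 2 ^ e = 261) :
    ({a, b, c, d, e} : Multiset ℕ) = {0, 0, 0, 1, 8} ∨
      ({a, b, c, d, e} : Multiset ℕ) = {0, 1, 1, 7, 7} ∨
      ({a, b, c, d, e} : Multiset ℕ) = {0, 2, 6, 6, 7} := by
  have := Nat.one_le_two_pow (n := a); have := Nat.one_le_two_pow (n := b)
  have := Nat.one_le_two_pow (n := c); have := Nat.one_le_two_pow (n := d)
  have := Nat.one_le_two_pow (n := e)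
  exact exponents_of_five_two_pows_fin ⟨a, lt_nine_of_two_pow_le_261 (by omega)⟩
    ⟨b, lt_nine_of_two_pow_le_261 (by omega)⟩ ⟨c, lt_nine_of_two_pow_le_261 (by omega)⟩
    ⟨d, lt_nine_of_two_pow_le_261 (by omega)⟩ ⟨e, lt_nine_of_two_pow_le_261 (by omega)⟩ h

lemma eq_of_sum_hdeg_eq_five_of_sum_ideg_eq_261 (s : Multiset Gen)
    (h5 : (s.map hdeg).sum = 5) (h261 : (s.map ideg).sum = 261) :
    s = {.h 0, .D3 2} ∨ s = {.h 0, .h 0, .h 0, .h 1, .h 8} ∨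
      s = {.h 0, .h 1, .h 1, .h 7, .h 7} ∨ s = {.h 0, .h 2, .h 6, .h 6, .h 7} := by
  obtain ⟨l, rfl⟩ := Quot.exists_rep s
  simp only [Multiset.quot_mk_to_coe'', Multiset.map_coe, Multiset.sum_coe] at h5 h261 ⊢
  rcases l with _ | ⟨a, _ | ⟨b, _ | ⟨c, _ | ⟨d, _ | ⟨e, _ | ⟨f, t⟩⟩⟩⟩⟩⟩ <;>
    simp only [List.map_cons, List.map_nil, List.sum_cons, List.sum_nil, add_zero] at h5 h261
  · exact absurd h5 (by norm_num)
  · exact absurd h261 (ideg_ne_261_of_hdeg_eq_five h5)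
  · have := hdeg_eq_one_or_three_le a; have := hdeg_eq_one_or_three_le b
    obtain ⟨ha, hb⟩ | ⟨ha, hb⟩ : hdeg a = 1 ∧ hdeg b = 4 ∨ hdeg a = 4 ∧ hdeg b = 1 := by omega
    · obtain ⟨rfl, rfl⟩ := eq_h_zero_and_eq_D3_two ha hb h261
      exact .inl rfl
    · obtain ⟨rfl, rfl⟩ := eq_h_zero_and_eq_D3_two hb ha (by omega)
      exact .inl (Multiset.pair_comm _ _)
  · have := hdeg_eq_one_or_three_le a; have := hdeg_eq_one_or_three_le b
    have := hdeg_eq_one_or_three_le c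
    obtain ⟨ha, hb, hc⟩ | ⟨ha, hb, hc⟩ | ⟨ha, hb, hc⟩ :
        hdeg a = 1 ∧ hdeg b = 1 ∧ hdeg c = 3 ∨ hdeg a = 1 ∧ hdeg b = 3 ∧ hdeg c = 1 ∨
          hdeg a = 3 ∧ hdeg b = 1 ∧ hdeg c = 1 := by omega
    · exact absurd (by omega) (ideg_add_ideg_add_ideg_ne_261 ha hb hc)
    · exact absurd (by omega) (ideg_add_ideg_add_ideg_ne_261 ha hc hb)
    · exact absurd (by omega) (ideg_add_ideg_add_ideg_ne_261 hb hc ha)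
  · have := hdeg_eq_one_or_three_le a; have := hdeg_eq_one_or_three_le b
    have := hdeg_eq_one_or_three_le c; have := hdeg_eq_one_or_three_le d
    omega
  · have := hdeg_eq_one_or_three_le a; have := hdeg_eq_one_or_three_le b
    have := hdeg_eq_one_or_three_le c; have := hdeg_eq_one_or_three_le d
    have := hdeg_eq_one_or_three_le e
    obtain ⟨i₁, rfl⟩ := exists_eq_h_of_hdeg_eq_one (g := a) (by omega)
    obtain ⟨i₂, rfl⟩ := exists_eq_h_of_hdeg_eq_one (g := b) (by omega)
    obtain ⟨i₃, rfl⟩ := exists_eq_h_of_hdeg_eq_one (g := c) (by omega)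
    obtain ⟨i₄, rfl⟩ := exists_eq_h_of_hdeg_eq_one (g := d) (by omega)
    obtain ⟨i₅, rfl⟩ := exists_eq_h_of_hdeg_eq_one (g := e) (by omega)
    simp only [ideg, ← add_assoc] at h261
    refine .inr ((exponents_of_five_two_pows_eq_261 h261).imp ?_ (Or.imp ?_ ?_)) <;>
      intro hm <;> simpa [← Multiset.cons_coe] using congrArg (Multiset.map Gen.h) hm
  · have := hdeg_eq_one_or_three_le a; have := hdeg_eq_one_or_three_le b
    have := hdeg_eq_one_or_three_le c; have := hdeg_eq_one_or_three_le d
    have := hdeg_eq_one_or_three_le e; have := hdeg_eq_one_or_three_le f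
    omega

lemma mkE_eq_zero_of_h_mul_h_succ_dvd {p : P} (j : ℕ)
    (hp : X (Gen.h j) * X (Gen.h (j + 1)) ∣ p) : mkE p = 0 :=
  Ideal.Quotient.eq_zero_iff_mem.2 <|
    relIdeal.mem_of_dvd hp (Ideal.subset_span (Set.mem_iUnion.2 ⟨j, Set.mem_insert _ _⟩))

lemma mkE_h0_pow_three_mul_h1_mul_h8 : mkE (X (Gen.h 0) ^ 3 * X (Gen.h 1) * X (Gen.h 8)) = 0 :=
  mkE_eq_zero_of_h_mul_h_succ_dvd 0 ⟨X (Gen.h 0) ^ 2 * X (Gen.h 8), by ring⟩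

lemma mkE_h0_mul_h1_sq_mul_h7_sq : mkE (X (Gen.h 0) * X (Gen.h 1) ^ 2 * X (Gen.h 7) ^ 2) = 0 :=
  mkE_eq_zero_of_h_mul_h_succ_dvd 0 ⟨X (Gen.h 1) * X (Gen.h 7) ^ 2, by ring⟩

lemma mkE_h0_mul_h2_mul_h6_sq_mul_h7 :
    mkE (X (Gen.h 0) * X (Gen.h 2) * X (Gen.h 6) ^ 2 * X (Gen.h 7)) = 0 :=
  mkE_eq_zero_of_h_mul_h_succ_dvd 6 ⟨X (Gen.h 0) * X (Gen.h 2) * X (Gen.h 6), by ring⟩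

def h0D32Point : Gen → ZMod 2
  | .h i => if i = 0 then 1 else 0
  | .D3 i => if i = 2 then 1 else 0
  | _ => 0

lemma relIdeal_le_ker_aeval_h0D32Point : relIdeal ≤ RingHom.ker (aeval h0D32Point) := by
  rw [relIdeal, Ideal.span_le, rels, Set.iUnion_subset_iff]
  intro j
  simp only [Set.insert_subset_iff, Set.singleton_subset_iff, SetLike.mem_coe, RingHom.mem_ker,
    map_mul, map_sub, map_pow, aeval_X, h0D32Point]
  split_ifs <;> simp_all

lemma mkE_h0_mul_D3_two_ne_zero : mkE (X (Gen.h 0) * X (Gen.D3 2)) ≠ 0 := fun h ↦ by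
  have := relIdeal_le_ker_aeval_h0D32Point (Ideal.Quotient.eq_zero_iff_mem.1 h)
  simp [h0D32Point] at this

lemma mkE_monomial_mem_span_h0_mul_D3_two {d : Gen →₀ ℕ} (h5 : weight hdeg d = 5)
    (h261 : weight ideg d = 261) :
    mkE (monomial d 1) ∈ Submodule.span (ZMod 2) {mkE (X (Gen.h 0) * X (Gen.D3 2))} := by
  rw [weight_eq_sum_map_toMultiset] at h5 h261
  rw [monomial_one_eq_prod_map_X_toMultiset]
  rcases eq_of_sum_hdeg_eq_five_of_sum_ideg_eq_261 _ h5 h261 with hd | hd | hd | hd <;>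
    simp only [hd, Multiset.insert_eq_cons, Multiset.map_cons, Multiset.map_singleton,
      Multiset.prod_cons, Multiset.prod_singleton]
  · exact Submodule.mem_span_singleton_self _
  · convert Submodule.zero_mem _
    exact (congrArg mkE (by ring)).trans mkE_h0_pow_three_mul_h1_mul_h8
  · convert Submodule.zero_mem _
    exact (congrArg mkE (by ring)).trans mkE_h0_mul_h1_sq_mul_h7_sq
  · convert Submodule.zero_mem _
    exact (congrArg mkE (by ring)).trans mkE_h0_mul_h2_mul_h6_sq_mul_h7

lemma mkE_h0_mul_D3_two_mem_component : mkE (X (Gen.h 0) * X (Gen.D3 2)) ∈ component 5 261 :=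
  ⟨_, ⟨(isWeightedHomogeneous_X _ hdeg _).mul (isWeightedHomogeneous_X _ hdeg _),
    (isWeightedHomogeneous_X _ ideg _).mul (isWeightedHomogeneous_X _ ideg _)⟩, rfl⟩

/-- `E′^{5,261}` is one-dimensional over `F₂` with basis the class of `h₀D₃(2)`; moreover
`h₀³h₁h₈ = h₀h₁²h₇² = h₀h₂h₆²h₇ = 0` in `E′`. -/
theorem stmt11 :
    component 5 261 = Submodule.span (ZMod 2) {mkE (X (Gen.h 0) * X (Gen.D3 2))} ∧
      mkE (X (Gen.h 0) * X (Gen.D3 2)) ≠ 0 ∧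
      mkE (X (Gen.h 0) ^ 3 * X (Gen.h 1) * X (Gen.h 8)) = 0 ∧
      mkE (X (Gen.h 0) * X (Gen.h 1) ^ 2 * X (Gen.h 7) ^ 2) = 0 ∧
      mkE (X (Gen.h 0) * X (Gen.h 2) * X (Gen.h 6) ^ 2 * X (Gen.h 7)) = 0 :=
  ⟨le_antisymm
      (map_inf_weightedHomogeneousSubmodule_le _ fun _ ↦ mkE_monomial_mem_span_h0_mul_D3_two)
      ((Submodule.span_singleton_le_iff_mem _ _).2 mkE_h0_mul_D3_two_mem_component),
    mkE_h0_mul_D3_two_ne_zero, mkE_h0_pow_three_mul_h1_mul_h8, mkE_h0_mul_h1_sq_mul_h7_sq,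
    mkE_h0_mul_h2_mul_h6_sq_mul_h7⟩
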